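/- arXiv:cs/0611126 — 4 statements merged into one kernel-verified Lean document; each statement's English description precedes it below -/
import Mathlib

section
/- For every n ∈ ℕ and every integer c > 2, the hypergraph H_n satisfies disc(H_n, c) ≥ n/c. -/
open Finset

/-- `c`-color discrepancy of the subhypergraph of `(V, E)` induced on `V₀`:
minimum over colorings of the maximum over colors `d` and edges `e` of
`||χ⁻¹(d) ∩ e ∩ V₀| - |e ∩ V₀|/c|`. -/
noncomputable def hdiscSub {V : Type*} [Fintype V] [DecidableEq V]
    (E : Finset (Finset V)) (c : ℕ) (V₀ : Finset V) : ℝ :=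
  ⨅ χ : V → Fin c, ⨆ d : Fin c, ⨆ e : E,
    |(((e.1 ∩ V₀).filter (fun v => χ v = d)).card : ℝ) - ((e.1 ∩ V₀).card : ℝ) / c|

/-- `c`-color discrepancy of the hypergraph `(V, E)`. -/
noncomputable def hdisc {V : Type*} [Fintype V] [DecidableEq V]
    (E : Finset (Finset V)) (c : ℕ) : ℝ := hdiscSub E c Finset.univ

/-- hereditary `c`-color discrepancy: maximum over all induced subhypergraphs. -/
noncomputable def hherdisc {V : Type*} [Fintype V] [DecidableEq V]
    (E : Finset (Finset V)) (c : ℕ) : ℝ := ⨆ V₀ : Finset V, hdiscSub E c V₀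

/-- The hypergraph `H_n` on vertex set `A ⊔ B` with `|A| = |B| = n`, whose edges are exactly
the sets containing equally many vertices of `A` and of `B`. -/
def Hn (n : ℕ) : Finset (Finset (Fin n ⊕ Fin n)) :=
  Finset.univ.filter (fun e =>
    (e.filter (fun v => v.isLeft = true)).card = (e.filter (fun v => v.isRight = true)).card)

/-!
Given a `c`-coloring with `c ≥ 3`, at most one color covers more than half of `A` and at most
one covers more than half of `B`, so some color `d` covers at most half of each side. Taking
`⌈n/2⌉` vertices of each side avoiding `d` gives an edge of `H_n` with at least `n` vertices and
no vertex of color `d`, so the discrepancy of `d` on it is at least `n/c`.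
-/

section Fibers

variable {α γ β : Type*} [Fintype α] [Fintype γ] [Fintype β] [DecidableEq β]

theorem card_filter_card_fiber_gt_half_le_one (f : α → β) :
    #{b | Fintype.card α < 2 * #{a | f a = b}} ≤ 1 := by
  classical
  refine card_le_one.mpr fun b₁ hb₁ b₂ hb₂ => by_contra fun hne => ?_
  simp only [mem_filter, mem_univ, true_and] at hb₁ hb₂
  have hpair : #{a | f a = b₁} + #{a | f a = b₂} ≤ Fintype.card α := by
    rw [← card_union_of_disjoint (disjoint_filter.mpr fun a _ h₁ h₂ => hne (h₁.symm.trans h₂))]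
    exact card_le_univ _
  omega

theorem exists_card_fiber_le_half_of_two_lt_card (f : α → β) (g : γ → β)
    (hβ : 2 < Fintype.card β) :
    ∃ b, 2 * #{a | f a = b} ≤ Fintype.card α ∧ 2 * #{x | g x = b} ≤ Fintype.card γ := by
  set Mf : Finset β := {b | Fintype.card α < 2 * #{a | f a = b}}
  set Mg : Finset β := {b | Fintype.card γ < 2 * #{x | g x = b}}
  have hcover : #(Mf ∪ Mg) < #(univ : Finset β) := by
    have hf : #Mf ≤ 1 := card_filter_card_fiber_gt_half_le_one f
    have hg : #Mg ≤ 1 := card_filter_card_fiber_gt_half_le_one g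
    have := card_union_le Mf Mg
    rw [card_univ]
    omega
  obtain ⟨b, -, hb⟩ := exists_mem_notMem_of_card_lt_card hcover
  simp only [Mf, Mg, mem_union, mem_filter, mem_univ, true_and, not_or, not_lt] at hb
  exact ⟨b, hb⟩

theorem half_le_card_filter_not (p : α → Prop) [DecidablePred p]
    (h : 2 * #{a | p a} ≤ Fintype.card α) : (Fintype.card α + 1) / 2 ≤ #{a | ¬p a} := by
  have := card_filter_add_card_filter_not (s := univ) (fun a => p a)
  rw [card_univ] at this
  omega

end Fibers

theorem le_hdisc_of_forall_exists {V : Type*} [Fintype V] [DecidableEq V]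
    {E : Finset (Finset V)} {c : ℕ} [NeZero c] {r : ℝ}
    (h : ∀ χ : V → Fin c, ∃ d, ∃ e ∈ E, r ≤ |(#{v ∈ e | χ v = d} : ℝ) - #e / c|) :
    r ≤ hdisc E c := by
  refine le_ciInf fun χ => ?_
  obtain ⟨d, e, he, hr⟩ := h χ
  refine le_ciSup_of_le (Set.finite_range _).bddAbove d ?_
  refine le_ciSup_of_le (Set.finite_range _).bddAbove ⟨e, he⟩ ?_
  simpa only [inter_univ] using hr

theorem disjSum_mem_Hn {n : ℕ} {S T : Finset (Fin n)} (h : #S = #T) : S.disjSum T ∈ Hn n := by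
  have hleft : {v ∈ S.disjSum T | v.isLeft} = S.map .inl := by
    ext (v | v) <;> simp
  have hright : {v ∈ S.disjSum T | v.isRight} = T.map .inr := by
    ext (v | v) <;> simp
  simp [Hn, hleft, hright, h]

theorem exists_mem_Hn_avoiding {n : ℕ} {β : Type*} [DecidableEq β] (χ : Fin n ⊕ Fin n → β)
    (d : β) (hA : 2 * #{i | χ (.inl i) = d} ≤ n) (hB : 2 * #{i | χ (.inr i) = d} ≤ n) :
    ∃ e ∈ Hn n, (∀ v ∈ e, χ v ≠ d) ∧ n ≤ #e := by
  obtain ⟨S, hS, hScard⟩ :=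
    exists_subset_card_eq (half_le_card_filter_not _ (hA.trans_eq (Fintype.card_fin n).symm))
  obtain ⟨T, hT, hTcard⟩ :=
    exists_subset_card_eq (half_le_card_filter_not _ (hB.trans_eq (Fintype.card_fin n).symm))
  refine ⟨S.disjSum T, disjSum_mem_Hn (hScard.trans hTcard.symm), ?_, ?_⟩
  · rintro (i | i) hi
    · exact (mem_filter.mp (hS (inl_mem_disjSum.mp hi))).2
    · exact (mem_filter.mp (hT (inr_mem_disjSum.mp hi))).2
  · rw [card_disjSum, hScard, hTcard, Fintype.card_fin]
    omega

/-- For every n ∈ ℕ and every integer c > 2, the hypergraph H_n satisfies disc(H_n, c) ≥ n/c. -/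
theorem disc_Hn_ge (n c : ℕ) (hc : 2 < c) :
    (n : ℝ) / c ≤ hdisc (Hn n) c := by
  have : NeZero c := ⟨by omega⟩
  refine le_hdisc_of_forall_exists fun χ => ?_
  obtain ⟨d, hA, hB⟩ := exists_card_fiber_le_half_of_two_lt_card (χ ∘ .inl) (χ ∘ .inr)
    (by rwa [Fintype.card_fin])
  rw [Fintype.card_fin] at hA hB
  obtain ⟨e, he, havoid, hcard⟩ := exists_mem_Hn_avoiding χ d hA hB
  refine ⟨d, e, he, ?_⟩
  rw [filter_false_of_mem havoid, card_empty, Nat.cast_zero, zero_sub, abs_neg,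
    abs_of_nonneg (by positivity)]
  gcongr
end

section
/- Let c ≥ 3 be an odd integer, ℓ ≥ 1, t ∈ M_{c,ℓ}, and let A be a real m×n matrix. Let p : {1,…,n} → [0,1] be the constant floating coloring with p(j) = t for all j. Then there exists a floating coloring p' : {1,…,n} → M_{c,ℓ−1} such that d_A(p, p') ≤ (1/2)·(c − 1)·c^{−ℓ+1} · herdisc(A, c). -/
open Finset

/-- `c`-color discrepancy of a matrix: minimum over `c`-colorings `p` of the columns of the
maximum over colors `d` and rows `i` of `|∑_{j : p j = d} A i j - (1/c) ∑_j A i j|`. -/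
noncomputable def mdisc {ι κ : Type*} [Fintype ι] [Fintype κ] (A : ι → κ → ℝ) (c : ℕ) : ℝ :=
  ⨅ p : κ → Fin c, ⨆ d : Fin c, ⨆ i : ι,
    |∑ j ∈ Finset.univ.filter (fun j => p j = d), A i j - (1 / (c : ℝ)) * ∑ j, A i j|

/-- hereditary `c`-color discrepancy: maximum of `mdisc` over all nonempty column submatrices. -/
noncomputable def mherdisc {ι : Type*} [Fintype ι] {n : ℕ} (A : ι → Fin n → ℝ) (c : ℕ) : ℝ :=
  ⨆ J : {J : Finset (Fin n) // J.Nonempty}, mdisc (fun i (j : {x // x ∈ J.1}) => A i j.1) c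

/-- `d_A(p,q) = max_i |∑_j a_{ij} (p j - q j)|` for floating colorings `p, q`. -/
noncomputable def dA {ι κ : Type*} [Fintype ι] [Fintype κ] (A : ι → κ → ℝ) (p q : κ → ℝ) : ℝ :=
  ⨆ i : ι, |∑ j, A i j * (p j - q j)|

/-- weighted discrepancy with weight `z`: min over `{0,1}`-colorings `q` of `d_A(z·1, q)`. -/
noncomputable def wdisc {ι κ : Type*} [Fintype ι] [Fintype κ] (A : ι → κ → ℝ) (z : ℝ) : ℝ :=
  ⨅ q : κ → Bool, dA A (fun _ => z) (fun j => if q j then 1 else 0)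

/-- `M_{c,ℓ}`: numbers in `[0,1]` with a `c`-ary expansion `∑_{i=0}^ℓ a_i c^{-i}`,
with digits `a_i ∈ {0, …, c-1}`. -/
def Mset (c ℓ : ℕ) : Set ℝ :=
  {x | x ∈ Set.Icc (0:ℝ) 1 ∧
    ∃ a : Fin (ℓ+1) → ℕ, (∀ i, a i < c) ∧ x = ∑ i, (a i : ℝ) / (c : ℝ) ^ (i : ℕ)}

lemma mem_Mset_div {c : ℕ} (hc : 2 ≤ c) :
    ∀ L k : ℕ, k ≤ c ^ L → ((k : ℝ) / (c : ℝ) ^ L) ∈ Mset c L := by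
  have hc0 : (0:ℝ) < (c:ℝ) := by exact_mod_cast (by omega : (0:ℕ) < c)
  intro L
  induction L with
  | zero =>
      intro k hk
      simp only [pow_zero, div_one] at hk ⊢
      refine ⟨⟨by positivity, by exact_mod_cast hk⟩, fun _ => k,
        fun _ => lt_of_le_of_lt hk (by omega), ?_⟩
      simp
  | succ L ih =>
      intro k hk
      have hcpos : 0 < c := by omega
      have hq : k / c ≤ c ^ L := by
        have h1 : k / c ≤ c ^ (L+1) / c := Nat.div_le_div_right hk
        rwa [pow_succ, Nat.mul_div_cancel _ hcpos] at h1
      obtain ⟨⟨h0, h1⟩, b, hb, hrep⟩ := ih (k / c) hq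
      have hkr : (k : ℝ) = (c:ℝ) * ((k / c : ℕ) : ℝ) + ((k % c : ℕ) : ℝ) := by
        exact_mod_cast (Nat.div_add_mod k c).symm
      refine ⟨⟨by positivity, ?_⟩, Fin.snoc b (k % c), ?_, ?_⟩
      · rw [div_le_one (by positivity)]
        have : ((k:ℕ):ℝ) ≤ ((c ^ (L+1) : ℕ) : ℝ) := by exact_mod_cast hk
        simpa using this
      · intro i
        refine Fin.lastCases ?_ (fun i => ?_) i
        · simpa using Nat.mod_lt _ hcpos
        · simpa using hb i
      · rw [Fin.sum_univ_castSucc]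
        simp only [Fin.snoc_castSucc, Fin.snoc_last, Fin.coe_castSucc, Fin.val_last]
        rw [← hrep, hkr, pow_succ]
        field_simp


lemma exists_good_coloring {m n : ℕ} (c : ℕ) (hm : 0 < m) (hn : 0 < n) (hc : 0 < c)
    (A : Fin m → Fin n → ℝ) :
    ∃ q : Fin n → Fin c, ∀ (d : Fin c) (i : Fin m),
      |∑ j ∈ Finset.univ.filter (fun j => q j = d), A i j - (1 / (c:ℝ)) * ∑ j, A i j|
        ≤ mherdisc A c := by
  haveI : Nonempty (Fin c) := Fin.pos_iff_nonempty.mp hc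
  haveI : Nonempty (Fin n) := Fin.pos_iff_nonempty.mp hn
  haveI : Nonempty (Fin m) := Fin.pos_iff_nonempty.mp hm
  haveI : Nonempty {x // x ∈ (univ : Finset (Fin n))} := ⟨⟨Classical.arbitrary _, mem_univ _⟩⟩
  obtain ⟨p₀, hp₀⟩ := exists_eq_ciInf_of_finite
    (f := fun (p : {x // x ∈ (univ : Finset (Fin n))} → Fin c) =>
      ⨆ d : Fin c, ⨆ i : Fin m,
        |∑ j ∈ Finset.univ.filter (fun j => p j = d), A i j.1
          - (1/(c:ℝ)) * ∑ j : {x // x ∈ (univ : Finset (Fin n))}, A i j.1|)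
  refine ⟨fun j => p₀ ⟨j, mem_univ j⟩, fun d i => ?_⟩
  have hs1 : ∑ j ∈ Finset.univ.filter (fun j => p₀ ⟨j, mem_univ j⟩ = d), A i j
      = ∑ j ∈ Finset.univ.filter (fun j => p₀ j = d), A i j.1 := by
    rw [Finset.sum_filter, Finset.sum_filter]
    exact (Fintype.sum_equiv (Equiv.subtypeUnivEquiv (fun x => mem_univ x))
      (fun x : {x // x ∈ (univ : Finset (Fin n))} => if p₀ x = d then A i x.1 else 0)
      (fun j : Fin n => if p₀ ⟨j, mem_univ j⟩ = d then A i j else 0) (fun x => rfl)).symm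
  have hs2 : ∑ j, A i j = ∑ j : {x // x ∈ (univ : Finset (Fin n))}, A i j.1 :=
    (Fintype.sum_equiv (Equiv.subtypeUnivEquiv (fun x => mem_univ x))
      (fun j : {x // x ∈ (univ : Finset (Fin n))} => A i j.1)
      (fun j : Fin n => A i j) (fun x => rfl)).symm
  rw [hs1, hs2]
  have ha : |∑ j ∈ Finset.univ.filter (fun j => p₀ j = d), A i j.1
        - (1/(c:ℝ)) * ∑ j : {x // x ∈ (univ : Finset (Fin n))}, A i j.1|
      ≤ ⨆ i : Fin m,
        |∑ j ∈ Finset.univ.filter (fun j => p₀ j = d), A i j.1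
          - (1/(c:ℝ)) * ∑ j : {x // x ∈ (univ : Finset (Fin n))}, A i j.1| :=
    le_ciSup (f := fun i : Fin m => |∑ j ∈ Finset.univ.filter (fun j => p₀ j = d), A i j.1
      - (1/(c:ℝ)) * ∑ j : {x // x ∈ (univ : Finset (Fin n))}, A i j.1|)
      (Finite.bddAbove_range _) i
  have hb : (⨆ i : Fin m,
        |∑ j ∈ Finset.univ.filter (fun j => p₀ j = d), A i j.1
          - (1/(c:ℝ)) * ∑ j : {x // x ∈ (univ : Finset (Fin n))}, A i j.1|)
      ≤ ⨆ d : Fin c, ⨆ i : Fin m,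
        |∑ j ∈ Finset.univ.filter (fun j => p₀ j = d), A i j.1
          - (1/(c:ℝ)) * ∑ j : {x // x ∈ (univ : Finset (Fin n))}, A i j.1| :=
    le_ciSup (f := fun d : Fin c => ⨆ i : Fin m,
      |∑ j ∈ Finset.univ.filter (fun j => p₀ j = d), A i j.1
      - (1/(c:ℝ)) * ∑ j : {x // x ∈ (univ : Finset (Fin n))}, A i j.1|)
      (Finite.bddAbove_range _) d
  refine (ha.trans hb).trans ?_
  rw [hp₀]
  show mdisc (fun i (j : {x // x ∈ (univ : Finset (Fin n))}) => A i j.1) c ≤ mherdisc A c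
  rw [mherdisc]
  exact le_ciSup (f := fun J : {J : Finset (Fin n) // J.Nonempty} =>
      mdisc (fun i (j : {x // x ∈ J.1}) => A i j.1) c)
      (Finite.bddAbove_range _) ⟨univ, univ_nonempty⟩

lemma mherdisc_nonneg {m n : ℕ} (c : ℕ) (hm : 0 < m) (hn : 0 < n) (hc : 0 < c)
    (A : Fin m → Fin n → ℝ) : 0 ≤ mherdisc A c := by
  obtain ⟨q, hq⟩ := exists_good_coloring c hm hn hc A
  exact le_trans (abs_nonneg _) (hq ⟨0, hc⟩ ⟨0, hm⟩)

lemma card_filter_val_lt (c k : ℕ) (hkc : k ≤ c) :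
    (Finset.univ.filter (fun d : Fin c => (d : ℕ) < k)).card = k := by
  refine Finset.card_eq_of_bijective (fun i hi => ⟨i, lt_of_lt_of_le hi hkc⟩) ?_ ?_ ?_
  · intro a ha
    simp only [mem_filter, mem_univ, true_and] at ha
    exact ⟨(a : ℕ), ha, Fin.ext rfl⟩
  · intro i hi
    simp [hi]
  · intro i j hi hj h
    simpa using congrArg Fin.val h


/-- Rounding lemma: for odd c ≥ 3, ℓ ≥ 1, t ∈ M_{c,ℓ} and the constant floating coloring p ≡ t,
there is a floating coloring p' with values in M_{c,ℓ−1} such that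
d_A(p, p') ≤ (1/2)·(c−1)·c^{−ℓ+1}·herdisc(A, c). -/
theorem rounding_in_principle {m n : ℕ} (hm : 0 < m) (hn : 0 < n)
    (A : Fin m → Fin n → ℝ) (c ℓ : ℕ) (hc : 3 ≤ c) (hodd : Odd c) (hl : 1 ≤ ℓ)
    (t : ℝ) (ht : t ∈ Mset c ℓ) :
    ∃ p' : Fin n → ℝ, (∀ j, p' j ∈ Mset c (ℓ - 1)) ∧
      dA A (fun _ => t) p' ≤
        (1 / 2) * ((c : ℝ) - 1) * (c : ℝ) ^ ((1 : ℤ) - ℓ) * mherdisc A c := by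

  obtain ⟨L, rfl⟩ : ∃ L, ℓ = L + 1 := ⟨ℓ - 1, by omega⟩
  haveI : Nonempty (Fin m) := Fin.pos_iff_nonempty.mp hm
  have hc0 : (0:ℝ) < (c:ℝ) := by exact_mod_cast (by omega : (0:ℕ) < c)
  have hcL : (0:ℝ) < (c:ℝ) ^ L := pow_pos hc0 L
  have hcL1 : (0:ℝ) < (c:ℝ) ^ (L+1) := pow_pos hc0 (L+1)
  obtain ⟨⟨ht0, ht1⟩, a, ha, hrep⟩ := ht
  set aL : ℕ := a (Fin.last (L+1)) with haL
  set s : ℝ := ∑ i : Fin (L+1), (a i.castSucc : ℝ) / (c:ℝ) ^ (i:ℕ) with hs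
  have hts : t = s + (aL:ℝ) / (c:ℝ) ^ (L+1) := by
    rw [hrep, Fin.sum_univ_castSucc]
    simp [hs, haL]
  set K : ℕ := ∑ i : Fin (L+1), a i.castSucc * c ^ (L - (i:ℕ)) with hK
  have hsK : s = (K:ℝ) / (c:ℝ) ^ L := by
    rw [hs, hK]
    push_cast
    rw [Finset.sum_div]
    refine Finset.sum_congr rfl fun i _ => ?_
    rw [div_eq_div_iff (pow_pos hc0 _).ne' hcL.ne', mul_assoc, ← pow_add]
    congr 2
    omega
  have hs1 : s ≤ 1 := by
    have h1 : s + (aL:ℝ)/(c:ℝ)^(L+1) ≤ 1 := by rw [← hts]; exact ht1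
    have h2 : 0 ≤ (aL:ℝ)/(c:ℝ)^(L+1) := by positivity
    linarith
  have hKle : K ≤ c ^ L := by
    have h1 : (K:ℝ)/(c:ℝ)^L ≤ 1 := by rw [← hsK]; exact hs1
    rw [div_le_one hcL] at h1
    exact_mod_cast h1
  have hsmem : s ∈ Mset c L := by
    rw [hsK]; exact mem_Mset_div (by omega) L K hKle
  have haLc : aL < c := ha _
  obtain ⟨w, hw⟩ := hodd
  set k : ℕ := min aL (c - aL) with hk
  have hk2 : 2 * k ≤ c - 1 := by omega
  have hkc : k ≤ c := by omega
  have hkaL : (k:ℝ) ≤ ((c:ℝ) - 1)/2 := by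
    have h4 : ((2*k:ℕ):ℝ) ≤ ((c - 1:ℕ):ℝ) := by exact_mod_cast hk2
    rw [Nat.cast_sub (by omega)] at h4
    push_cast at h4
    linarith
  obtain ⟨q, hq⟩ := exists_good_coloring c hm hn (by omega) A
  have hH0 : 0 ≤ mherdisc A c := mherdisc_nonneg c hm hn (by omega) A
  set H := mherdisc A c with hH
  -- key estimate
  have key : ∀ i : Fin m,
      |(∑ j ∈ Finset.univ.filter (fun j => ((q j : ℕ) < k)), A i j)
        - ((k:ℝ)/(c:ℝ)) * ∑ j, A i j| ≤ (k:ℝ) * H := by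
    intro i
    set D : Finset (Fin c) := Finset.univ.filter (fun d : Fin c => (d:ℕ) < k) with hD
    have hDcard : D.card = k := card_filter_val_lt c k hkc
    have hfe : Finset.univ.filter (fun j : Fin n => ((q j : ℕ) < k))
        = Finset.univ.filter (fun j => q j ∈ D) := by
      simp [hD]
    have h1 : ∑ j ∈ Finset.univ.filter (fun j => q j ∈ D), A i j
        = ∑ d ∈ D, ∑ j ∈ Finset.univ.filter (fun j => q j = d), A i j :=
      (Finset.sum_fiberwise_eq_sum_filter univ D q (A i)).symm
    have h2 : ((k:ℝ)/(c:ℝ)) * ∑ j, A i j = ∑ _d ∈ D, (1/(c:ℝ)) * ∑ j, A i j := by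
      rw [Finset.sum_const, hDcard, nsmul_eq_mul]; ring
    rw [hfe, h1, h2, ← Finset.sum_sub_distrib]
    refine (Finset.abs_sum_le_sum_abs _ _).trans ?_
    refine le_trans (Finset.sum_le_sum (fun d _ => hq d i)) ?_
    rw [Finset.sum_const, hDcard, nsmul_eq_mul]
  -- the final numeric bound
  have hzp : (c:ℝ) ^ ((1:ℤ) - ((L+1:ℕ):ℤ)) = ((c:ℝ)^L)⁻¹ := by
    have he : (1:ℤ) - ((L+1:ℕ):ℤ) = -(L:ℤ) := by push_cast; ring
    rw [he, zpow_neg, zpow_natCast]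
  have final : ((c:ℝ)^L)⁻¹ * ((k:ℝ) * H)
      ≤ (1/2) * ((c:ℝ) - 1) * (c:ℝ) ^ ((1:ℤ) - ((L+1:ℕ):ℤ)) * H := by
    rw [hzp]
    have h6 : (k:ℝ) * H ≤ (((c:ℝ)-1)/2) * H := mul_le_mul_of_nonneg_right hkaL hH0
    have h7 : ((c:ℝ)^L)⁻¹ * ((k:ℝ) * H) ≤ ((c:ℝ)^L)⁻¹ * ((((c:ℝ)-1)/2) * H) :=
      mul_le_mul_of_nonneg_left h6 (by positivity)
    refine h7.trans (le_of_eq ?_)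
    ring
  by_cases hcc : aL ≤ c - aL
  · -- round up the k = aL smallest colors
    have hkeq : k = aL := by omega
    have hcast1 : (aL:ℝ) = (k:ℝ) := by exact_mod_cast hkeq.symm
    refine ⟨fun j => if ((q j : ℕ) < k) then s + ((c:ℝ)^L)⁻¹ else s, ?_, ?_⟩
    · intro j
      show (if ((q j : ℕ) < k) then s + ((c:ℝ)^L)⁻¹ else s) ∈ Mset c L
      split_ifs with hcond
      · have hk1 : 1 ≤ aL := by omega
        have hKlt : K + 1 ≤ c ^ L := by
          have h5 : (K:ℝ)/(c:ℝ)^L < 1 := by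
            rw [← hsK]
            have h8 : (1:ℝ) ≤ (aL:ℝ) := by exact_mod_cast hk1
            have h9 : (0:ℝ) < (aL:ℝ)/(c:ℝ)^(L+1) := by positivity
            have h10 : s + (aL:ℝ)/(c:ℝ)^(L+1) ≤ 1 := by rw [← hts]; exact ht1
            linarith
          rw [div_lt_one hcL] at h5
          have h11 : K < c ^ L := by exact_mod_cast h5
          omega
        have h12 : s + ((c:ℝ)^L)⁻¹ = (((K+1:ℕ)):ℝ)/(c:ℝ)^L := by
          rw [hsK]; push_cast; field_simp
        rw [h12]
        exact mem_Mset_div (by omega) L (K+1) hKlt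
      · exact hsmem
    · -- the dA bound
      simp only [dA]
      refine ciSup_le fun i => ?_
      have e0 : ∀ j, A i j * (t - (if ((q j : ℕ) < k) then s + ((c:ℝ)^L)⁻¹ else s))
          = A i j * t - (A i j * s
            + (if ((q j : ℕ) < k) then A i j * ((c:ℝ)^L)⁻¹ else 0)) := by
        intro j
        by_cases hcond : ((q j : ℕ) < k) <;> simp only [hcond, if_true, if_false] <;> ring
      have hsum : ∑ j, A i j * (t - (if ((q j : ℕ) < k) then s + ((c:ℝ)^L)⁻¹ else s))
          = -(((c:ℝ)^L)⁻¹ * ((∑ j ∈ Finset.univ.filter (fun j => ((q j : ℕ) < k)), A i j)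
              - ((k:ℝ)/(c:ℝ)) * ∑ j, A i j)) := by
        rw [Finset.sum_congr rfl (fun j _ => e0 j), Finset.sum_sub_distrib,
          Finset.sum_add_distrib, ← Finset.sum_filter, ← Finset.sum_mul, ← Finset.sum_mul,
          ← Finset.sum_mul, hts, hcast1, pow_succ]
        field_simp
        ring
      rw [hsum, abs_neg, abs_mul, abs_of_nonneg (a := ((c:ℝ)^L)⁻¹) (by positivity)]
      exact le_trans (mul_le_mul_of_nonneg_left (key i) (by positivity)) final
  · -- round down the k = c - aL smallest colors
    have hkeq : k = c - aL := by omega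
    have hcast2 : (aL:ℝ) = (c:ℝ) - (k:ℝ) := by
      have : aL = c - k := by omega
      rw [this, Nat.cast_sub (by omega)]
    have hk1 : 1 ≤ aL := by omega
    have hKlt : K + 1 ≤ c ^ L := by
      have h5 : (K:ℝ)/(c:ℝ)^L < 1 := by
        rw [← hsK]
        have h8 : (1:ℝ) ≤ (aL:ℝ) := by exact_mod_cast hk1
        have h9 : (0:ℝ) < (aL:ℝ)/(c:ℝ)^(L+1) := by positivity
        have h10 : s + (aL:ℝ)/(c:ℝ)^(L+1) ≤ 1 := by rw [← hts]; exact ht1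
        linarith
      rw [div_lt_one hcL] at h5
      have h11 : K < c ^ L := by exact_mod_cast h5
      omega
    refine ⟨fun j => if ((q j : ℕ) < k) then s else s + ((c:ℝ)^L)⁻¹, ?_, ?_⟩
    · intro j
      show (if ((q j : ℕ) < k) then s else s + ((c:ℝ)^L)⁻¹) ∈ Mset c L
      split_ifs with hcond
      · exact hsmem
      · have h12 : s + ((c:ℝ)^L)⁻¹ = (((K+1:ℕ)):ℝ)/(c:ℝ)^L := by
          rw [hsK]; push_cast; field_simp
        rw [h12]
        exact mem_Mset_div (by omega) L (K+1) hKlt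
    · simp only [dA]
      refine ciSup_le fun i => ?_
      have e0 : ∀ j, A i j * (t - (if ((q j : ℕ) < k) then s else s + ((c:ℝ)^L)⁻¹))
          = A i j * t - (A i j * (s + ((c:ℝ)^L)⁻¹)
            - (if ((q j : ℕ) < k) then A i j * ((c:ℝ)^L)⁻¹ else 0)) := by
        intro j
        by_cases hcond : ((q j : ℕ) < k) <;> simp only [hcond, if_true, if_false] <;> ring
      have hsum : ∑ j, A i j * (t - (if ((q j : ℕ) < k) then s else s + ((c:ℝ)^L)⁻¹))
          = ((c:ℝ)^L)⁻¹ * ((∑ j ∈ Finset.univ.filter (fun j => ((q j : ℕ) < k)), A i j)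
              - ((k:ℝ)/(c:ℝ)) * ∑ j, A i j) := by
        rw [Finset.sum_congr rfl (fun j _ => e0 j), Finset.sum_sub_distrib,
          Finset.sum_sub_distrib, ← Finset.sum_filter, ← Finset.sum_mul, ← Finset.sum_mul,
          ← Finset.sum_mul, hts, hcast2, pow_succ]
        field_simp
        ring
      rw [hsum, abs_mul, abs_of_nonneg (a := ((c:ℝ)^L)⁻¹) (by positivity)]
      exact le_trans (mul_le_mul_of_nonneg_left (key i) (by positivity)) final
end

section
/- Let c ≥ 3 be an odd integer, ℓ ≥ 1, and let A be a real m×n matrix. Let p : {1,…,n} → M_{c,ℓ} be a floating coloring taking exactly τ distinct values. Then there exists a floating coloring q : {1,…,n} → M_{c,ℓ−1} such that d_A(p, q) ≤ (1/2)·(c − 1)·c^{−ℓ+1} · τ · herdisc(A, c). -/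
open Finset

/-!
Write each value `v` of `p` as `k / c^ℓ` and split off its last base-`c` digit `a = k % c`, so
that `v = ⌊k / c⌋ / c^(ℓ-1) + a / c^ℓ`. On the columns where `p = v`, take a `c`-colouring of
discrepancy at most `herdisc(A, c)`, round `v` up to `(⌊k / c⌋ + 1) / c^(ℓ-1)` on the columns
whose colour is `< a` and down to `⌊k / c⌋ / c^(ℓ-1)` on the others. Up to sign and the factor
`c^(1-ℓ)`, the error on that class is the sum of `a` of the `c` colour-class deviations `E_d`;
as `∑ E_d = 0` it is also minus the sum of the other `c - a`, so it is at most
`min(a, c - a) · herdisc ≤ (c-1)/2 · herdisc` for odd `c`. Summing over the `τ` classes gives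
the bound.
-/

lemma exists_eq_natCast_div_pow_of_mem_Mset {c ℓ : ℕ} (hc : 0 < c) {x : ℝ}
    (hx : x ∈ Mset c ℓ) : ∃ k ≤ c ^ ℓ, x = k / (c : ℝ) ^ ℓ := by
  obtain ⟨⟨-, hx1⟩, a, -, rfl⟩ := hx
  have hxk : ∑ i, (a i : ℝ) / (c : ℝ) ^ (i : ℕ) =
      ((∑ i : Fin (ℓ + 1), a i * c ^ (ℓ - i) : ℕ) : ℝ) / (c : ℝ) ^ ℓ := by
    push_cast
    rw [sum_div]
    refine sum_congr rfl fun i _ => ?_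
    rw [← pow_sub_mul_pow (c : ℝ) (Nat.lt_succ_iff.mp i.2)]
    field_simp
  refine ⟨_, ?_, hxk⟩
  rw [hxk, div_le_one (by positivity)] at hx1
  exact_mod_cast hx1

lemma natCast_div_pow_mem_Mset {c L k : ℕ} (hc : 2 ≤ c) (hk : k ≤ c ^ L) :
    (k : ℝ) / (c : ℝ) ^ L ∈ Mset c L := by
  have hc0 : (0 : ℝ) < c := by positivity
  refine ⟨⟨by positivity, (div_le_one (by positivity)).mpr (by exact_mod_cast hk)⟩, ?_⟩
  induction L generalizing k with
  | zero => exact ⟨fun _ => k, fun _ => show k < c by simp only [pow_zero] at hk; omega, by simp⟩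
  | succ L ih =>
    obtain ⟨a, ha, hsum⟩ := ih (k := k / c) (Nat.div_le_of_le_mul (by rwa [← pow_succ']))
    refine ⟨Fin.snoc (α := fun _ => ℕ) a (k % c),
      Fin.lastCases (by simpa using Nat.mod_lt k (by omega)) (by simpa using ha), ?_⟩
    rw [Fin.sum_univ_castSucc]
    simp only [Fin.snoc_castSucc, Fin.snoc_last, Fin.val_castSucc, Fin.val_last, ← hsum]
    conv_lhs => rw [← Nat.div_add_mod k c]
    push_cast
    field_simp
    ring

lemma natCast_div_add_ite_div_pow_mem_Mset {c L k : ℕ} (hc : 2 ≤ c) (hk : k ≤ c ^ (L + 1))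
    (b : Prop) [Decidable b] (hb : b → 0 < k % c) :
    ((k / c + if b then 1 else 0 : ℕ) : ℝ) / (c : ℝ) ^ L ∈ Mset c L := by
  refine natCast_div_pow_mem_Mset hc ?_
  have hdiv : c * (k / c) + k % c ≤ c * c ^ L := by rwa [Nat.div_add_mod, ← pow_succ']
  split_ifs with h
  · have hpos := hb h
    have : k / c < c ^ L := Nat.lt_of_mul_lt_mul_left (a := c) (by omega)
    omega
  · rw [add_zero]
    exact Nat.le_of_mul_le_mul_left (by omega) (by omega : 0 < c)

lemma natCast_div_pow_succ_sub_div_add_ite {c : ℕ} (hc : 0 < c) (L k : ℕ) (b : Prop) [Decidable b] :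
    (k : ℝ) / (c : ℝ) ^ (L + 1) - ((k / c + if b then 1 else 0 : ℕ) : ℝ) / (c : ℝ) ^ L =
      (((k % c : ℕ) : ℝ) / c - if b then 1 else 0) / (c : ℝ) ^ L := by
  have hk : (k : ℝ) = c * (k / c : ℕ) + (k % c : ℕ) := by
    exact_mod_cast (Nat.div_add_mod k c).symm
  rw [hk]
  push_cast
  field_simp
  split_ifs <;> ring

lemma abs_sum_le_min_of_sum_eq_zero {ι : Type*} [Fintype ι] [DecidableEq ι] {E : ι → ℝ} {H : ℝ}
    (hE : ∀ i, |E i| ≤ H) (hsum : ∑ i, E i = 0) (S : Finset ι) :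
    |∑ i ∈ S, E i| ≤ min (#S * H) (#Sᶜ * H) := by
  have hcard (T : Finset ι) : |∑ i ∈ T, E i| ≤ #T * H :=
    (abs_sum_le_sum_abs _ _).trans (by simpa using sum_le_card_nsmul T _ H fun i _ => hE i)
  have hcompl : ∑ i ∈ S, E i = -∑ i ∈ Sᶜ, E i := by linarith [sum_add_sum_compl S E]
  exact le_min (hcard S) (by rw [hcompl, abs_neg]; exact hcard Sᶜ)

lemma sum_mul_comp_eq_sum_fiber {κ β R : Type*} [Fintype β] [DecidableEq β] [CommSemiring R]
    (J : Finset κ) (x : κ → R) (χ : κ → β) (g : β → R) :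
    ∑ j ∈ J, x j * g (χ j) = ∑ d, g d * ∑ j ∈ J with χ j = d, x j := by
  rw [← sum_fiberwise J χ]
  refine sum_congr rfl fun d _ => ?_
  rw [mul_sum]
  refine sum_congr rfl fun j hj => ?_
  rw [(mem_filter.mp hj).2, mul_comm]

lemma abs_sum_mul_digit_sub_le {κ : Type*} {c : ℕ} (hodd : Odd c) (J : Finset κ) (x : κ → ℝ)
    (χ : κ → Fin c) {H : ℝ}
    (hχ : ∀ d, |∑ j ∈ J with χ j = d, x j - 1 / (c : ℝ) * ∑ j ∈ J, x j| ≤ H) (a : Fin c) :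
    |∑ j ∈ J, x j * ((a : ℝ) / c - if χ j < a then 1 else 0)| ≤ ((c : ℝ) - 1) / 2 * H := by
  have hc : (0 : ℝ) < c := by exact_mod_cast hodd.pos
  set S := ∑ j ∈ J, x j
  set T : Fin c → ℝ := fun d => ∑ j ∈ J with χ j = d, x j
  set E : Fin c → ℝ := fun d => T d - 1 / (c : ℝ) * S
  have hT : ∑ d, T d = S := sum_fiberwise J χ x
  have hE : ∑ d, E d = 0 := by
    simp only [E, sum_sub_distrib, hT, sum_const, card_univ, Fintype.card_fin, nsmul_eq_mul]
    field_simp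
    ring
  have hweighted : ∑ d, ((a : ℝ) / c - if d < a then 1 else 0) * T d =
      a / c * S - ∑ d ∈ Iio a, T d := by
    simp only [sub_mul, ite_mul, one_mul, zero_mul, sum_sub_distrib, ← mul_sum, hT,
      ← sum_filter, filter_gt_eq_Iio]
  have hpartial : ∑ d ∈ Iio a, E d = ∑ d ∈ Iio a, T d - a * (1 / c * S) := by
    simp only [E, sum_sub_distrib, sum_const, Fin.card_Iio, nsmul_eq_mul]
  have hkey : ∑ j ∈ J, x j * ((a : ℝ) / c - if χ j < a then 1 else 0) = -∑ d ∈ Iio a, E d := by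
    rw [sum_mul_comp_eq_sum_fiber J x χ fun d => (a : ℝ) / c - if d < a then 1 else 0,
      hweighted, hpartial]
    field_simp
    ring
  have hH : 0 ≤ H := (abs_nonneg _).trans (hχ a)
  have hmin := abs_sum_le_min_of_sum_eq_zero hχ hE (Iio a)
  rw [card_compl, Fin.card_Iio, Fintype.card_fin] at hmin
  obtain ⟨r, rfl⟩ := hodd
  have hr : ((2 * r + 1 : ℕ) - 1 : ℝ) / 2 = r := by push_cast; ring
  rw [hkey, abs_neg, hr]
  refine hmin.trans ?_
  rcases le_or_gt (a : ℕ) r with har | har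
  · exact (min_le_left _ _).trans (by gcongr)
  · exact (min_le_right _ _).trans (by gcongr; omega)

lemma mherdisc_nonneg_s13 {ι : Type*} [Fintype ι] {n : ℕ} (A : ι → Fin n → ℝ) (c : ℕ) :
    0 ≤ mherdisc A c :=
  Real.iSup_nonneg fun _ => Real.iInf_nonneg fun _ =>
    Real.iSup_nonneg fun _ => Real.iSup_nonneg fun _ => abs_nonneg _

lemma exists_coloring_le_mdisc {ι κ : Type*} [Fintype ι] [Fintype κ] (A : ι → κ → ℝ) {c : ℕ}
    (hc : 0 < c) : ∃ χ : κ → Fin c, ∀ d i,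
      |∑ j ∈ univ with χ j = d, A i j - 1 / (c : ℝ) * ∑ j, A i j| ≤ mdisc A c := by
  have : Nonempty (Fin c) := ⟨⟨0, hc⟩⟩
  obtain ⟨χ, hχ⟩ := Finite.exists_min fun χ : κ → Fin c => ⨆ d : Fin c, ⨆ i : ι,
    |∑ j ∈ univ with χ j = d, A i j - 1 / (c : ℝ) * ∑ j, A i j|
  refine ⟨χ, fun d i => ?_⟩
  calc _ ≤ ⨆ i : ι, |∑ j ∈ univ with χ j = d, A i j - 1 / (c : ℝ) * ∑ j, A i j| :=
        le_ciSup (Finite.bddAbove_range _) i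
    _ ≤ _ := le_ciSup (f := fun d : Fin c => ⨆ i : ι,
        |∑ j ∈ univ with χ j = d, A i j - 1 / (c : ℝ) * ∑ j, A i j|) (Finite.bddAbove_range _) d
    _ ≤ mdisc A c := le_ciInf hχ

lemma mdisc_le_mherdisc {ι : Type*} [Fintype ι] {n : ℕ} (A : ι → Fin n → ℝ) (c : ℕ)
    {J : Finset (Fin n)} (hJ : J.Nonempty) : mdisc (fun i (j : J) => A i j) c ≤ mherdisc A c :=
  le_ciSup (f := fun J : {J : Finset (Fin n) // J.Nonempty} => mdisc (fun i (j : J.1) => A i j) c)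
    (Finite.bddAbove_range _) ⟨J, hJ⟩

lemma exists_coloring_le_mherdisc {ι : Type*} [Fintype ι] {n : ℕ} (A : ι → Fin n → ℝ) {c : ℕ}
    (hc : 0 < c) {J : Finset (Fin n)} (hJ : J.Nonempty) : ∃ χ : Fin n → Fin c, ∀ d i,
      |∑ j ∈ J with χ j = d, A i j - 1 / (c : ℝ) * ∑ j ∈ J, A i j| ≤ mherdisc A c := by
  obtain ⟨χ, hχ⟩ := exists_coloring_le_mdisc (fun i (j : J) => A i j) hc
  refine ⟨fun j => if h : j ∈ J then χ ⟨j, h⟩ else ⟨0, hc⟩, fun d i => ?_⟩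
  refine le_trans (le_of_eq ?_) ((hχ d i).trans (mdisc_le_mherdisc A c hJ))
  simp [sum_filter, ← sum_coe_sort J]

lemma exists_mem_Mset_abs_sum_mul_sub_le {ι : Type*} [Fintype ι] {n : ℕ} (A : ι → Fin n → ℝ)
    {c L : ℕ} (hc : 2 ≤ c) (hodd : Odd c) {x : ℝ} (hx : x ∈ Mset c (L + 1))
    {J : Finset (Fin n)} (hJ : J.Nonempty) :
    ∃ r : Fin n → ℝ, (∀ j, r j ∈ Mset c L) ∧
      ∀ i, |∑ j ∈ J, A i j * (x - r j)| ≤ ((c : ℝ) - 1) / 2 * mherdisc A c / (c : ℝ) ^ L := by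
  have hc0 : 0 < c := by omega
  obtain ⟨k, hk, rfl⟩ := exists_eq_natCast_div_pow_of_mem_Mset hc0 hx
  obtain ⟨χ, hχ⟩ := exists_coloring_le_mherdisc A hc0 hJ
  let a : Fin c := ⟨k % c, Nat.mod_lt _ hc0⟩
  refine ⟨fun j => ((k / c + if χ j < a then 1 else 0 : ℕ) : ℝ) / (c : ℝ) ^ L,
    fun j => natCast_div_add_ite_div_pow_mem_Mset hc hk _ fun h => Nat.zero_lt_of_lt h, fun i => ?_⟩
  simp only [natCast_div_pow_succ_sub_div_add_ite hc0, mul_div_assoc', ← sum_div]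
  rw [abs_div, abs_of_pos (pow_pos (Nat.cast_pos.mpr hc0) L : (0 : ℝ) < (c : ℝ) ^ L)]
  gcongr
  exact abs_sum_mul_digit_sub_le hodd J (A i) χ (fun d => hχ d i) a

theorem rounding_general_general {m n : ℕ}
    (A : Fin m → Fin n → ℝ) (c ℓ : ℕ) (hc : 3 ≤ c) (hodd : Odd c) (hl : 1 ≤ ℓ)
    (p : Fin n → ℝ) (hp : ∀ j, p j ∈ Mset c ℓ) (τ : ℕ)
    (hτ : (Finset.univ.image p).card = τ) :
    ∃ q : Fin n → ℝ, (∀ j, q j ∈ Mset c (ℓ - 1)) ∧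
      dA A p q ≤
        (1 / 2) * ((c : ℝ) - 1) * (c : ℝ) ^ ((1 : ℤ) - ℓ) * (τ : ℝ) * mherdisc A c := by
  obtain ⟨L, rfl⟩ : ∃ L, ℓ = L + 1 := ⟨ℓ - 1, by omega⟩
  set B := ((c : ℝ) - 1) / 2 * mherdisc A c / (c : ℝ) ^ L with hBdef
  have hmem (j : Fin n) : p j ∈ univ.image p := mem_image_of_mem p (mem_univ j)
  have hclass : ∀ v ∈ univ.image p, ∃ r : Fin n → ℝ, (∀ j, r j ∈ Mset c L) ∧
      ∀ i, |∑ j ∈ {j | p j = v}, A i j * (v - r j)| ≤ B := by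
    intro v hv
    obtain ⟨j, -, rfl⟩ := mem_image.mp hv
    exact exists_mem_Mset_abs_sum_mul_sub_le A (by omega) hodd (hp j) ⟨j, by simp⟩
  choose! r hr hrB using hclass
  have hrhs :
      τ * B = 1 / 2 * ((c : ℝ) - 1) * (c : ℝ) ^ ((1 : ℤ) - (L + 1 : ℕ)) * τ * mherdisc A c := by
    rw [hBdef, show (1 : ℤ) - (L + 1 : ℕ) = -(L : ℤ) by push_cast; ring, zpow_neg, zpow_natCast]
    field_simp
  have hB : 0 ≤ B := by
    have : (3 : ℝ) ≤ c := by exact_mod_cast hc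
    have := mherdisc_nonneg_s13 A c
    exact div_nonneg (by nlinarith) (by positivity)
  refine ⟨fun j => r (p j) j, fun j => hr _ (hmem j) j,
    Real.iSup_le (fun i => ?_) (hrhs ▸ mul_nonneg τ.cast_nonneg hB)⟩
  rw [← hrhs, ← sum_fiberwise_of_maps_to fun j _ => hmem j, ← hτ, ← nsmul_eq_mul, ← sum_const]
  refine (abs_sum_le_sum_abs _ _).trans (sum_le_sum fun v hv => le_of_eq_of_le ?_ (hrB v hv i))
  exact congrArg abs (sum_congr rfl fun j hj => by simp only [(mem_filter.mp hj).2])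

/-- Rounding a floating coloring with values in M_{c,ℓ} taking exactly τ distinct values:
there is q with values in M_{c,ℓ−1} with d_A(p, q) ≤ (1/2)·(c−1)·c^{−ℓ+1}·τ·herdisc(A, c). -/
theorem rounding_general {m n : ℕ} (hm : 0 < m) (hn : 0 < n)
    (A : Fin m → Fin n → ℝ) (c ℓ : ℕ) (hc : 3 ≤ c) (hodd : Odd c) (hl : 1 ≤ ℓ)
    (p : Fin n → ℝ) (hp : ∀ j, p j ∈ Mset c ℓ) (τ : ℕ)
    (hτ : (Finset.univ.image p).card = τ) :
    ∃ q : Fin n → ℝ, (∀ j, q j ∈ Mset c (ℓ - 1)) ∧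
      dA A p q ≤
        (1 / 2) * ((c : ℝ) - 1) * (c : ℝ) ^ ((1 : ℤ) - ℓ) * (τ : ℝ) * mherdisc A c :=
  rounding_general_general A c ℓ hc hodd hl p hp τ hτ
end

section
/- Let c > 2 and k ≥ 2 be integers and n := 2ck. The complete hypergraph K_n on n vertices satisfies herdisc(K_n, 2) ≥ (1/4)·c·herdisc(K_n, c). Consequently, the bound herwdisc(A,2) ≤ c·herdisc(A,c) is tight up to a constant factor. -/
open Finset

/-- The complete hypergraph on `n` vertices: every subset of the vertex set is an edge. -/
def Kn (n : ℕ) : Finset (Finset (Fin n)) := Finset.univ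

/-- For c > 2, k ≥ 2 and n = 2ck, the complete hypergraph on n vertices satisfies
herdisc(K_n, 2) ≥ (1/4)·c·herdisc(K_n, c). -/
theorem herdisc_complete_lower (c k n : ℕ) (hc : 2 < c) (hk : 2 ≤ k) (hn : n = 2 * c * k) :
    (1 / 4 : ℝ) * (c : ℝ) * hherdisc (Kn n) c ≤ hherdisc (Kn n) 2 := by
  have hc0 : (0:ℝ) < c := by exact_mod_cast (by omega : 0 < c)
  haveI : NeZero c := ⟨by omega⟩
  haveI : Nonempty {x // x ∈ Kn n} := ⟨⟨∅, Finset.mem_univ _⟩⟩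
  have hk0 : 0 < 2 * k := by omega
  -- Upper bound: hherdisc (Kn n) c ≤ 2k
  have hupper : hherdisc (Kn n) c ≤ 2 * (k:ℝ) := by
    apply ciSup_le
    intro V₀
    have hχlt : ∀ v : Fin n, v.1 / (2 * k) < c := by
      intro v
      rw [Nat.div_lt_iff_lt_mul hk0]
      calc v.1 < n := v.2
        _ = c * (2 * k) := by rw [hn]; ring
    set χ : Fin n → Fin c := fun v => ⟨v.1 / (2 * k), hχlt v⟩ with hχdef
    have hclass : ∀ d : Fin c,
        (Finset.univ.filter (fun v : Fin n => χ v = d)).card ≤ 2 * k := by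
      intro d
      calc (Finset.univ.filter (fun v : Fin n => χ v = d)).card
          ≤ (Finset.range (2 * k)).card := by
            apply Finset.card_le_card_of_injOn (fun v => v.1 % (2 * k))
            · intro v _
              exact Finset.mem_range.mpr (Nat.mod_lt _ hk0)
            · intro v hv w hw hvw
              simp only [Finset.mem_coe, Finset.mem_filter, hχdef, Fin.ext_iff] at hv hw
              have hvw' : v.1 % (2 * k) = w.1 % (2 * k) := hvw
              apply Fin.ext
              conv_lhs => rw [← Nat.div_add_mod v.1 (2 * k)]
              conv_rhs => rw [← Nat.div_add_mod w.1 (2 * k)]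
              rw [hv.2, hw.2, hvw']
        _ = 2 * k := Finset.card_range _
    refine le_trans (ciInf_le (Set.Finite.bddBelow (Set.finite_range _)) χ) ?_
    apply ciSup_le
    intro d
    apply ciSup_le
    intro e
    have hA : (((e.1 ∩ V₀).filter (fun v => χ v = d)).card : ℝ) ≤ 2 * k := by
      have h1 : ((e.1 ∩ V₀).filter (fun v => χ v = d)).card
          ≤ (Finset.univ.filter (fun v : Fin n => χ v = d)).card :=
        Finset.card_le_card (Finset.filter_subset_filter _ (Finset.subset_univ _))
      exact_mod_cast h1.trans (hclass d)
    have hB : (((e.1 ∩ V₀).card : ℝ)) / c ≤ 2 * k := by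
      rw [div_le_iff₀ hc0]
      have h1 : (e.1 ∩ V₀).card ≤ n := by
        calc (e.1 ∩ V₀).card ≤ Fintype.card (Fin n) := Finset.card_le_univ _
          _ = n := Fintype.card_fin n
      have h2 : ((e.1 ∩ V₀).card : ℝ) ≤ (n : ℝ) := by exact_mod_cast h1
      have h3 : (n : ℝ) = 2 * (k:ℝ) * c := by rw [hn]; push_cast; ring
      linarith
    have hA0 : (0:ℝ) ≤ (((e.1 ∩ V₀).filter (fun v => χ v = d)).card : ℝ) := by positivity
    have hB0 : (0:ℝ) ≤ (((e.1 ∩ V₀).card : ℝ)) / c := by positivity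
    rw [abs_le]
    constructor <;> linarith
  -- Lower bound: n/4 ≤ hherdisc (Kn n) 2
  have hlower : ((n:ℝ) / 4) ≤ hherdisc (Kn n) 2 := by
    refine le_trans ?_ (le_ciSup (Set.Finite.bddAbove (Set.finite_range _)) Finset.univ)
    unfold hdiscSub
    apply le_ciInf
    intro χ
    obtain ⟨d, hd⟩ : ∃ d : Fin 2,
        (n:ℝ) / 2 ≤ ((Finset.univ.filter (fun v : Fin n => χ v = d)).card : ℝ) := by
      by_contra h
      push_neg at h
      have h0 := h 0
      have h1 := h 1
      have hsum : (Finset.univ.filter (fun v : Fin n => χ v = 0)).card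
          + (Finset.univ.filter (fun v : Fin n => χ v = 1)).card = n := by
        have hiff : ∀ x : Fin 2, ¬ x = 0 ↔ x = 1 := by decide
        rw [show (Finset.univ.filter (fun v : Fin n => χ v = 1))
            = (Finset.univ.filter (fun v : Fin n => ¬ χ v = 0)) from by
          apply Finset.filter_congr; intro v _; simpa using (hiff (χ v)).symm]
        rw [Finset.card_filter_add_card_filter_not, Finset.card_univ, Fintype.card_fin]
      have hsum' : ((Finset.univ.filter (fun v : Fin n => χ v = 0)).card : ℝ)
          + ((Finset.univ.filter (fun v : Fin n => χ v = 1)).card : ℝ) = n := by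
        exact_mod_cast hsum
      linarith
    set e : Finset (Fin n) := Finset.univ.filter (fun v => χ v = d) with hedef
    have he : e ∈ Kn n := Finset.mem_univ _
    have hfil : (e ∩ Finset.univ).filter (fun v => χ v = d) = e := by
      rw [Finset.inter_univ]
      apply Finset.filter_true_of_mem
      intro v hv
      exact (Finset.mem_filter.mp hv).2
    have hterm : (n:ℝ) / 4 ≤
        |(((e ∩ Finset.univ).filter (fun v => χ v = d)).card : ℝ)
          - (((e ∩ Finset.univ).card : ℝ)) / (2:ℕ)| := by
      rw [hfil, Finset.inter_univ]
      have : ((e.card : ℝ)) - (e.card : ℝ) / (2:ℕ) = (e.card : ℝ) / 2 := by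
        push_cast; ring
      rw [this, abs_of_nonneg (by positivity)]
      rw [hedef]
      linarith
    refine le_trans hterm (le_trans
      (le_ciSup (f := fun e' : {x // x ∈ Kn n} =>
          |(((e'.1 ∩ Finset.univ).filter (fun v => χ v = d)).card : ℝ)
            - (((e'.1 ∩ Finset.univ).card : ℝ)) / (2:ℕ)|)
        (Set.Finite.bddAbove (Set.finite_range _)) (⟨e, he⟩ : {x // x ∈ Kn n}))
      (le_ciSup (f := fun d' : Fin 2 => ⨆ e' : {x // x ∈ Kn n},
          |(((e'.1 ∩ Finset.univ).filter (fun v => χ v = d')).card : ℝ)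
            - (((e'.1 ∩ Finset.univ).card : ℝ)) / (2:ℕ)|)
        (Set.Finite.bddAbove (Set.finite_range _)) d))
  calc (1 / 4 : ℝ) * (c : ℝ) * hherdisc (Kn n) c
      ≤ (1 / 4 : ℝ) * (c : ℝ) * (2 * (k:ℝ)) := by
        apply mul_le_mul_of_nonneg_left hupper (by positivity)
    _ = (n:ℝ) / 4 := by rw [hn]; push_cast; ring
    _ ≤ hherdisc (Kn n) 2 := hlower
end
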